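/- arXiv:1602.00075 — 2 statements merged into one kernel-verified Lean document; each statement's English description precedes it below -/
import Mathlib

section
/- Let (X, f_{1,∞}) be a NADS whose sequence of uniformly continuous maps converges uniformly to a continuous map f. If f_{1,∞} has collective sensitivity, then for every positive integer k, the k-th iterate system f_{1,∞}^{[k]} also has collective sensitivity. -/
/-- `traj f n = f_n ∘ ⋯ ∘ f_1` (with `f i` denoting `f_{i+1}`), i.e. `f_1^n`. -/
def traj {X : Type*} (f : ℕ → X → X) : ℕ → X → X
  | 0 => id
  | n + 1 => f n ∘ traj f n

/-- Collective sensitivity of the NADS `f_{1,∞}` with constant `δ`. -/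
def CollectivelySensitiveWith {X : Type*} [MetricSpace X] (f : ℕ → X → X) (δ : ℝ) : Prop :=
  ∀ n : ℕ, 0 < n → ∀ x : Fin n → X, Function.Injective x → ∀ ε > 0,
    ∃ y : Fin n → X, Function.Injective y ∧ (∀ i, dist (x i) (y i) < ε) ∧
      ∃ m > 0, ∃ i₀ : Fin n,
        (∀ i, dist (traj f m (x i)) (traj f m (y i₀)) ≥ δ) ∨
        (∀ i, dist (traj f m (y i)) (traj f m (x i₀)) ≥ δ)

lemma traj_add {X : Type*} (f : ℕ → X → X) (a : ℕ) :
    ∀ j : ℕ, ∀ u : X, traj f (a + j) u = traj (fun i => f (a + i)) j (traj f a u) := by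
  intro j
  induction j with
  | zero => intro u; rfl
  | succ j ih =>
    intro u
    show traj f ((a + j) + 1) u = _
    simp only [traj, Function.comp_apply, ih]

/-- uniform equicontinuity of the family `f n` -/
lemma equi_aux {X : Type*} [MetricSpace X] (f : ℕ → X → X) (g : X → X)
    (hu : ∀ i, UniformContinuous (f i))
    (hconv : ∀ ε > 0, ∃ N : ℕ, ∀ n > N, ∀ x : X, dist (f n x) (g x) < ε) :
    ∀ ε > 0, ∃ θ > 0, ∀ n : ℕ, ∀ u v : X, dist u v < θ → dist (f n u) (f n v) < ε := by
  -- first: g is uniformly continuous (metric form)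
  have hgUC : ∀ ε > 0, ∃ θ > 0, ∀ u v : X, dist u v < θ → dist (g u) (g v) < ε := by
    intro ε hε
    obtain ⟨N, hN⟩ := hconv (ε / 3) (by linarith)
    obtain ⟨θ, hθ, hθ'⟩ := (Metric.uniformContinuous_iff.mp (hu (N + 1))) (ε / 3) (by linarith)
    refine ⟨θ, hθ, fun u v huv => ?_⟩
    have h1 := hN (N + 1) (Nat.lt_succ_self N) u
    have h2 := hN (N + 1) (Nat.lt_succ_self N) v
    have h3 := hθ' huv
    calc dist (g u) (g v) ≤ dist (g u) (f (N + 1) u) + dist (f (N + 1) u) (g v) :=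
          dist_triangle _ _ _
      _ ≤ dist (g u) (f (N + 1) u) + (dist (f (N + 1) u) (f (N + 1) v)
            + dist (f (N + 1) v) (g v)) := by
          have := dist_triangle (f (N + 1) u) (f (N + 1) v) (g v); linarith
      _ < ε := by
          rw [dist_comm (g u)]
          linarith
  intro ε hε
  obtain ⟨N, hN⟩ := hconv (ε / 3) (by linarith)
  obtain ⟨θg, hθg, hθg'⟩ := hgUC (ε / 3) (by linarith)
  -- modulus for finitely many initial maps
  have hfin : ∀ M : ℕ, ∃ θ > 0, ∀ n ≤ M, ∀ u v : X, dist u v < θ →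
      dist (f n u) (f n v) < ε := by
    intro M
    induction M with
    | zero =>
      obtain ⟨θ, hθ, hθ'⟩ := (Metric.uniformContinuous_iff.mp (hu 0)) ε hε
      exact ⟨θ, hθ, fun n hn u v huv => by
        interval_cases n
        exact hθ' huv⟩
    | succ M ih =>
      obtain ⟨θ₀, hθ₀, hθ₀'⟩ := ih
      obtain ⟨θ₁, hθ₁, hθ₁'⟩ := (Metric.uniformContinuous_iff.mp (hu (M + 1))) ε hε
      refine ⟨min θ₀ θ₁, lt_min hθ₀ hθ₁, fun n hn u v huv => ?_⟩
      rcases Nat.lt_succ_iff_lt_or_eq.mp (Nat.lt_succ_of_le hn) with h | h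
      · exact hθ₀' n (Nat.lt_succ_iff.mp h) u v (lt_of_lt_of_le huv (min_le_left _ _))
      · subst h; exact hθ₁' (lt_of_lt_of_le huv (min_le_right _ _))
  obtain ⟨θf, hθf, hθf'⟩ := hfin N
  refine ⟨min θg θf, lt_min hθg hθf, fun n u v huv => ?_⟩
  rcases le_or_gt n N with h | h
  · exact hθf' n h u v (lt_of_lt_of_le huv (min_le_right _ _))
  · have h1 := hN n h u
    have h2 := hN n h v
    have h3 := hθg' u v (lt_of_lt_of_le huv (min_le_left _ _))
    calc dist (f n u) (f n v) ≤ dist (f n u) (g u) + dist (g u) (f n v) := dist_triangle _ _ _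
      _ ≤ dist (f n u) (g u) + (dist (g u) (g v) + dist (g v) (f n v)) := by
          have := dist_triangle (g u) (g v) (f n v); linarith
      _ < ε := by rw [dist_comm (g v)]; linarith

/-- uniform equicontinuity of all segment-compositions of length ≤ l -/
lemma seg_equi {X : Type*} [MetricSpace X] (f : ℕ → X → X) (g : X → X)
    (hu : ∀ i, UniformContinuous (f i))
    (hconv : ∀ ε > 0, ∃ N : ℕ, ∀ n > N, ∀ x : X, dist (f n x) (g x) < ε) :
    ∀ l : ℕ, ∀ ε > 0, ∃ θ > 0, ∀ j ≤ l, ∀ p : ℕ, ∀ u v : X, dist u v < θ →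
      dist (traj (fun i => f (p + i)) j u) (traj (fun i => f (p + i)) j v) < ε := by
  intro l
  induction l with
  | zero =>
    intro ε hε
    refine ⟨ε, hε, fun j hj p u v huv => ?_⟩
    interval_cases j
    exact huv
  | succ l ih =>
    intro ε hε
    obtain ⟨θ₁, hθ₁, hθ₁'⟩ := equi_aux f g hu hconv ε hε
    obtain ⟨θ₀, hθ₀, hθ₀'⟩ := ih (min ε θ₁) (lt_min hε hθ₁)
    refine ⟨θ₀, hθ₀, fun j hj p u v huv => ?_⟩
    rcases Nat.lt_succ_iff_lt_or_eq.mp (Nat.lt_succ_of_le hj) with h | h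
    · exact lt_of_lt_of_le (hθ₀' j (Nat.lt_succ_iff.mp h) p u v huv) (min_le_left _ _)
    · subst h
      have hbase := hθ₀' l le_rfl p u v huv
      have : dist (traj (fun i => f (p + i)) l u) (traj (fun i => f (p + i)) l v) < θ₁ :=
        lt_of_lt_of_le hbase (min_le_right _ _)
      exact hθ₁' (p + l) _ _ this

/-- If a NADS of uniformly continuous maps converging uniformly to a continuous map `g`
has collective sensitivity, then for every positive integer k, the k-th iterate system
(whose n-th composition from the start is `f_1^{nk}`) has collective sensitivity. -/
theorem stmt8 {X : Type*} [MetricSpace X] (f : ℕ → X → X) (g : X → X)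
    (hu : ∀ i, UniformContinuous (f i)) (hgc : Continuous g)
    (hconv : ∀ ε > 0, ∃ N : ℕ, ∀ n > N, ∀ x : X, dist (f n x) (g x) < ε)
    (hcs : ∃ δ > 0, CollectivelySensitiveWith f δ) :
    ∀ k : ℕ, 0 < k → ∃ δ > 0,
      ∀ n : ℕ, 0 < n → ∀ x : Fin n → X, Function.Injective x → ∀ ε > 0,
        ∃ y : Fin n → X, Function.Injective y ∧ (∀ i, dist (x i) (y i) < ε) ∧
          ∃ m > 0, ∃ i₀ : Fin n,
            (∀ i, dist (traj f (m * k) (x i)) (traj f (m * k) (y i₀)) ≥ δ) ∨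
            (∀ i, dist (traj f (m * k) (y i)) (traj f (m * k) (x i₀)) ≥ δ) := by
  obtain ⟨δ, hδ, hCS⟩ := hcs
  intro k hk
  obtain ⟨η, hη, hη'⟩ := seg_equi f g hu hconv k δ hδ
  refine ⟨η, hη, fun n hn x hx ε hε => ?_⟩
  obtain ⟨y, hy, hyx, m, hm, i₀, hcase⟩ := hCS n hn x hx (min ε η) (lt_min hε hη)
  refine ⟨y, hy, fun i => lt_of_lt_of_le (hyx i) (min_le_left _ _), ?_⟩
  -- decompose m = k*(m/k) + m%k
  set q := m / k with hq
  set r := m % k with hr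
  have hmqr : k * q + r = m := Nat.div_add_mod m k
  have hrk : r < k := Nat.mod_lt m hk
  -- key: separation at time m pulls back to time k*q
  have pull : ∀ a b : X, dist (traj f m a) (traj f m b) ≥ δ →
      dist (traj f (k * q) a) (traj f (k * q) b) ≥ η := by
    intro a b hab
    by_contra hlt
    push_neg at hlt
    have h1 := hη' r (le_of_lt hrk) (k * q) (traj f (k * q) a) (traj f (k * q) b) hlt
    rw [← traj_add, ← traj_add, hmqr] at h1
    exact absurd hab (not_le.mpr h1)
  -- q cannot be 0
  have hq0 : 0 < q := by
    by_contra hq0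
    push_neg at hq0
    interval_cases q
    have hsep : dist (x i₀) (y i₀) ≥ η ∨ dist (y i₀) (x i₀) ≥ η := by
      rcases hcase with h | h
      · left
        have := pull (x i₀) (y i₀) (h i₀)
        simpa [traj] using this
      · right
        have := pull (y i₀) (x i₀) (h i₀)
        simpa [traj] using this
    have hlt : dist (x i₀) (y i₀) < η := lt_of_lt_of_le (hyx i₀) (min_le_right _ _)
    rcases hsep with h | h
    · exact absurd hlt (not_lt.mpr h)
    · rw [dist_comm] at h
      exact absurd hlt (not_lt.mpr h)
  refine ⟨q, hq0, i₀, ?_⟩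
  have hqk : q * k = k * q := Nat.mul_comm q k
  rcases hcase with h | h
  · left
    intro i
    rw [hqk]
    exact pull (x i) (y i₀) (h i)
  · right
    intro i
    rw [hqk]
    exact pull (y i) (x i₀) (h i)
end

section
/- Let X be a metric space without isolated points, and let (X, f_{1,∞}) be a finitely generated NADS such that: (1) f_{1,∞} is topologically transitive; (2) the periodic points of f_{1,∞} are dense in X; (3) there exist two invariant periodic points x, y ∈ X with disjoint orbits. Then (X, f_{1,∞}) has sensitive dependence on initial conditions. -/
/-- A finitely generated NADS: all maps `f_i` lie in a finite set of maps. -/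
def FinGen {X : Type*} (f : ℕ → X → X) : Prop :=
  ∃ F : Set (X → X), F.Finite ∧ ∀ i, f i ∈ F

/-- Topological transitivity of the NADS `f_{1,∞}`. -/
def Transitive' {X : Type*} [MetricSpace X] (f : ℕ → X → X) : Prop :=
  ∀ U V : Set X, IsOpen U → IsOpen V → U.Nonempty → V.Nonempty →
    ∃ N > 0, (traj f N '' U ∩ V).Nonempty

/-- `x` is a periodic point of the NADS `f_{1,∞}`. -/
def IsPeriodicPt' {X : Type*} (f : ℕ → X → X) (x : X) : Prop :=
  ∃ N > 0, ∀ k : ℕ, traj f k x = traj f (N + k) x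

/-- The orbit of `x` under the NADS `f_{1,∞}`. -/
def orbit' {X : Type*} (f : ℕ → X → X) (x : X) : Set X :=
  Set.range fun n => traj f n x

/-- `x` is an invariant periodic point: a periodic point whose orbit is invariant. -/
def IsInvPeriodicPt {X : Type*} (f : ℕ → X → X) (x : X) : Prop :=
  IsPeriodicPt' f x ∧ ∀ i : ℕ, Set.MapsTo (f i) (orbit' f x) (orbit' f x)

/-- Sensitive dependence on initial conditions for the NADS `f_{1,∞}`. -/
def Sensitive {X : Type*} [MetricSpace X] (f : ℕ → X → X) : Prop :=
  ∃ δ > 0, ∀ x : X, ∀ ε > 0, ∃ y : X, ∃ n > 0,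
    dist x y < ε ∧ dist (traj f n x) (traj f n y) > δ

def seg {X : Type*} (f : ℕ → X → X) (N : ℕ) : ℕ → X → X
  | 0 => id
  | j + 1 => f (N + j) ∘ seg f N j

lemma traj_add_s9 {X : Type*} (f : ℕ → X → X) (N j : ℕ) (x : X) :
    traj f (N + j) x = seg f N j (traj f N x) := by
  induction j with
  | zero => rfl
  | succ j ih =>
    show f (N + j) (traj f (N + j) x) = f (N + j) (seg f N j (traj f N x))
    rw [ih]

lemma seg_continuous {X : Type*} [MetricSpace X] (f : ℕ → X → X)
    (hc : ∀ i, Continuous (f i)) (N j : ℕ) : Continuous (seg f N j) := by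
  induction j with
  | zero => exact continuous_id
  | succ j ih => exact (hc (N + j)).comp ih

lemma seg_mapsTo {X : Type*} {f : ℕ → X → X} {O : Set X}
    (h : ∀ i, Set.MapsTo (f i) O O) (N j : ℕ) : Set.MapsTo (seg f N j) O O := by
  induction j with
  | zero => exact Set.mapsTo_id O
  | succ j ih => exact (h (N + j)).comp ih

lemma seg_set_finite {X : Type*} {f : ℕ → X → X} (hfg : FinGen f) (j : ℕ) :
    {g : X → X | ∃ N, g = seg f N j}.Finite := by
  obtain ⟨F, hF, hmem⟩ := hfg
  induction j with
  | zero => exact (Set.finite_singleton id).subset (by rintro g ⟨N, rfl⟩; rfl)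
  | succ j ih =>
    have hsub : {g : X → X | ∃ N, g = seg f N (j + 1)} ⊆
        Set.image2 (· ∘ ·) F {g : X → X | ∃ N, g = seg f N j} := by
      rintro g ⟨N, rfl⟩
      exact ⟨f (N + j), hmem _, seg f N j, ⟨N, rfl⟩, rfl⟩
    exact (Set.Finite.image2 _ hF ih).subset hsub

lemma traj_mul {X : Type*} {f : ℕ → X → X} {r : X} {n : ℕ}
    (h : ∀ k, traj f k r = traj f (n + k) r) (k : ℕ) : traj f (k * n) r = r := by
  induction k with
  | zero => simp [traj]
  | succ k ih =>
    have he : (k + 1) * n = n + k * n := by ring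
    rw [he, ← h (k * n), ih]

lemma orbit_finite {X : Type*} {f : ℕ → X → X} {r : X} (h : IsPeriodicPt' f r) :
    (orbit' f r).Finite := by
  obtain ⟨n, hn, hper⟩ := h
  have key : ∀ m, ∃ k < n, traj f m r = traj f k r := by
    intro m
    induction m using Nat.strong_induction_on with
    | _ m ih =>
      by_cases hm : m < n
      · exact ⟨m, hm, rfl⟩
      · obtain ⟨k, hk, hk2⟩ := ih (m - n) (by omega)
        refine ⟨k, hk, ?_⟩
        have hm' : m = n + (m - n) := by omega
        rw [hm', ← hper (m - n), hk2]
  have hsub : orbit' f r ⊆ (fun k => traj f k r) '' Set.Iio n := by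
    rintro _ ⟨m, rfl⟩
    obtain ⟨k, hk, he⟩ := key m
    exact ⟨k, hk, he.symm⟩
  exact ((Set.finite_Iio n).image _).subset hsub

/-- Banks-type theorem for finitely generated NADS: on a metric space without isolated
points, transitivity + dense periodic points + two invariant periodic points with
disjoint orbits imply sensitivity. -/
theorem stmt9 {X : Type*} [MetricSpace X] (f : ℕ → X → X)
    (hc : ∀ i, Continuous (f i)) (hfg : FinGen f)
    (hiso : ∀ x : X, Filter.NeBot (nhdsWithin x {x}ᶜ))
    (htrans : Transitive' f)
    (hdense : Dense {x : X | IsPeriodicPt' f x})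
    (hinv : ∃ x y : X, IsInvPeriodicPt f x ∧ IsInvPeriodicPt f y ∧
      orbit' f x ∩ orbit' f y = ∅) :
    Sensitive f := by
  obtain ⟨p, q, hp, hq, hdisj⟩ := hinv
  have hopne : (orbit' f p).Nonempty := ⟨p, 0, rfl⟩
  have hoqne : (orbit' f q).Nonempty := ⟨q, 0, rfl⟩
  have hopf : (orbit' f p).Finite := orbit_finite hp.1
  have hoqf : (orbit' f q).Finite := orbit_finite hq.1
  have hDf : (Set.image2 dist (orbit' f p) (orbit' f q)).Finite :=
    Set.Finite.image2 _ hopf hoqf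
  have hDne : (Set.image2 dist (orbit' f p) (orbit' f q)).Nonempty :=
    hopne.image2 hoqne
  set c := hDf.toFinset.min' (by simpa using hDne) with hc_def
  have hcmem : c ∈ Set.image2 dist (orbit' f p) (orbit' f q) := by
    have := hDf.toFinset.min'_mem (by simpa using hDne)
    simpa using this
  have hcpos : 0 < c := by
    obtain ⟨a, ha, b, hb, he⟩ := hcmem
    rw [← he]
    refine dist_pos.2 fun hab => ?_
    have : a ∈ orbit' f p ∩ orbit' f q := ⟨ha, hab ▸ hb⟩
    rw [hdisj] at this
    exact this
  have hcle : ∀ a ∈ orbit' f p, ∀ b ∈ orbit' f q, c ≤ dist a b := by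
    intro a ha b hb
    exact Finset.min'_le _ _ (by simpa using Set.mem_image2_of_mem ha hb)
  set δ := c / 8 with hδ_def
  have hδpos : 0 < δ := by positivity
  refine ⟨δ, hδpos, ?_⟩
  intro x ε hε
  -- choose the far invariant periodic point v
  have hv : ∃ v : X, IsInvPeriodicPt f v ∧ ∀ u ∈ orbit' f v, 4 * δ ≤ dist x u := by
    by_contra hcon
    push_neg at hcon
    obtain ⟨u, hu, hu4⟩ := hcon p hp
    obtain ⟨u', hu', hu4'⟩ := hcon q hq
    have h1 := hcle u hu u' hu'
    have h2 := dist_triangle u x u'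
    rw [dist_comm u x] at h2
    have : c ≤ 8 * δ := by linarith
    rw [hδ_def] at this
    linarith
  obtain ⟨v, hvinv, hvfar⟩ := hv
  have hOne : (orbit' f v).Nonempty := ⟨v, 0, rfl⟩
  set ε0 := min ε δ with hε0_def
  have hε0 : 0 < ε0 := lt_min hε hδpos
  -- periodic point in the ball
  obtain ⟨r, hrper, hrx⟩ : ∃ r, IsPeriodicPt' f r ∧ dist x r < ε0 := by
    have hx := hdense x
    rw [Metric.mem_closure_iff] at hx
    obtain ⟨r, hr, hrd⟩ := hx ε0 hε0
    exact ⟨r, hr, hrd⟩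
  obtain ⟨n, hn, hper⟩ := hrper
  -- the open set W
  set T : Set (X → X) := {g | ∃ N, ∃ j ≤ n, g = seg f N j} with hT_def
  have hTfin : T.Finite := by
    have hsub : T ⊆ ⋃ j ∈ Set.Iic n, {g : X → X | ∃ N, g = seg f N j} := by
      rintro g ⟨N, j, hj, rfl⟩
      exact Set.mem_biUnion hj ⟨N, rfl⟩
    exact ((Set.finite_Iic n).biUnion fun j _ => seg_set_finite hfg j).subset hsub
  set W := ⋂ g ∈ T, g ⁻¹' {z | Metric.infDist z (orbit' f v) < δ} with hW_def
  have hWopen : IsOpen W := by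
    refine hTfin.isOpen_biInter fun g hg => ?_
    obtain ⟨N, j, hj, rfl⟩ := hg
    exact (isOpen_lt (Metric.continuous_infDist_pt (orbit' f v)) continuous_const).preimage
      (seg_continuous f hc N j)
  have hvW : v ∈ W := by
    rw [hW_def]
    refine Set.mem_biInter fun g hg => ?_
    obtain ⟨N, j, hj, rfl⟩ := hg
    have hmem : seg f N j v ∈ orbit' f v := seg_mapsTo hvinv.2 N j ⟨0, rfl⟩
    have h0 : Metric.infDist (seg f N j v) (orbit' f v) ≤ 0 := by
      have := Metric.infDist_le_dist_of_mem (x := seg f N j v) hmem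
      simpa using this
    simp only [Set.mem_preimage, Set.mem_setOf_eq]
    linarith
  obtain ⟨N, hN, w, ⟨z, hz, hzw⟩, hwW⟩ :=
    htrans (Metric.ball x ε0) W Metric.isOpen_ball hWopen
      ⟨x, Metric.mem_ball_self hε0⟩ ⟨v, hvW⟩
  set Tm := n * (N / n + 1) with hTm_def
  have hmod := Nat.div_add_mod N n
  have hTmeq : n * (N / n + 1) = n * (N / n) + n := by ring
  have hmodlt : N % n < n := Nat.mod_lt _ hn
  have hTmN : N ≤ Tm := by rw [hTm_def, hTmeq]; omega
  have hTj : Tm = N + (Tm - N) := by omega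
  have hjn : Tm - N ≤ n := by rw [hTm_def, hTmeq]; omega
  have hTmpos : 0 < Tm := by positivity
  have hrT : traj f Tm r = r := by
    have := traj_mul hper (N / n + 1)
    rwa [hTm_def, mul_comm]
  have hzO : Metric.infDist (traj f Tm z) (orbit' f v) < δ := by
    have hsegT : seg f N (Tm - N) ∈ T := ⟨N, Tm - N, hjn, rfl⟩
    have h1 := Set.mem_iInter₂.1 (hW_def ▸ hwW) _ hsegT
    rw [hTj, traj_add_s9, hzw]
    exact h1
  obtain ⟨u, huO, huz⟩ := (Metric.infDist_lt_iff hOne).1 hzO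
  have hxu : 4 * δ ≤ dist x u := hvfar u huO
  have hxz : dist x z < ε0 := by
    rw [dist_comm]; exact Metric.mem_ball.1 hz
  have hkey : 2 * δ < dist (traj f Tm r) (traj f Tm z) := by
    rw [hrT]
    have t1 := dist_triangle4 x r (traj f Tm z) u
    have hε0δ : ε0 ≤ δ := min_le_right _ _
    linarith
  have t2 := dist_triangle (traj f Tm r) (traj f Tm x) (traj f Tm z)
  by_cases hcase : δ < dist (traj f Tm x) (traj f Tm r)
  · exact ⟨r, Tm, hTmpos, lt_of_lt_of_le hrx (min_le_left _ _), hcase⟩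
  · push_neg at hcase
    refine ⟨z, Tm, hTmpos, lt_of_lt_of_le hxz (min_le_left _ _), ?_⟩
    rw [dist_comm] at hcase
    linarith
end
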